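/- arXiv:math/0209050 — 5 statements merged into one kernel-verified Lean document; each statement's English description precedes it below -/
import Mathlib

section
/- Let s > 0 and c ∈ ℝ, and let g : [s, ∞) → ℝ be continuously differentiable and satisfy, for all t ≥ s, the integro-differential equation g'(t) = −g(t) + (1/t)·∫_s^t g(ξ) dξ + c/t. Then g'(s) = −g(s) + c/s, and for all t ≥ s one has g(t) = g'(s)·s·e^s·I(t,s) + g(s). -/
/-!
Rewriting the equation as `t g'(t) = -t g(t) + ∫_s^t g + c` shows that `h(t) = t g'(t)` is
differentiable with `h' = -g - t g' + g = -h`. Hence `h(t) = e^{s-t} h(s)`, i.e.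
`g'(t) = g'(s) s e^s e^{-t}/t`, and integrating from `s` to `t` gives the formula for `g`.
-/

open MeasureTheory Real Set Filter Topology

section
variable {s : ℝ}

theorem hasDerivWithinAt_intervalIntegral_Ici {g : ℝ → ℝ} (hg : ContinuousOn g (Ici s))
    {t : ℝ} (ht : t ∈ Ici s) :
    HasDerivWithinAt (fun u => ∫ ξ in s..u, g ξ) (g t) (Ici s) t := by
  have hint : IntervalIntegrable g volume s t :=
    (hg.mono (by rw [uIcc_of_le ht]; exact Icc_subset_Ici_self)).intervalIntegrable
  have hmeas : AEStronglyMeasurable g (volume.restrict (Ici s)) :=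
    hg.aestronglyMeasurable measurableSet_Ici
  rcases (mem_Ici.mp ht).eq_or_lt with rfl | hlt
  · exact intervalIntegral.integral_hasDerivWithinAt_right hint
      ⟨Ici s, mem_of_superset self_mem_nhdsWithin Ioi_subset_Ici_self, hmeas⟩
      ((hg s ht).mono Ioi_subset_Ici_self)
  · have hmem : Ici s ∈ 𝓝 t := Ici_mem_nhds hlt
    exact (intervalIntegral.integral_hasDerivAt_right hint ⟨Ici s, hmem, hmeas⟩
      ((hg t ht).continuousAt hmem)).hasDerivWithinAt

theorem eq_exp_sub_mul_of_hasDerivWithinAt_neg {f : ℝ → ℝ}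
    (hf : ∀ t ∈ Ici s, HasDerivWithinAt f (-f t) (Ici s) t) {t : ℝ} (ht : t ∈ Ici s) :
    f t = exp (s - t) * f s := by
  have hexp : ∀ u ∈ Ici s, HasDerivWithinAt (fun u => exp u * f u) 0 (Ici s) u := fun u hu =>
    ((hasDerivAt_exp u).hasDerivWithinAt.mul (hf u hu)).congr_deriv (by ring)
  have hconst := constant_of_has_deriv_right_zero (a := s) (b := t)
    (fun u hu => (hexp u hu.1).continuousWithinAt.mono Icc_subset_Ici_self)
    (fun u hu => (hexp u hu.1).mono (Ici_subset_Ici.mpr hu.1)) t ⟨ht, le_rfl⟩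
  rw [exp_sub, div_mul_eq_mul_div, eq_div_iff (exp_pos t).ne', ← hconst]
  ring

theorem mul_deriv_eq_exp_sub_mul {c : ℝ} {g g' : ℝ → ℝ} (hs : 0 < s)
    (hderiv : ∀ t ∈ Ici s, HasDerivWithinAt g (g' t) (Ici s) t)
    (heq : ∀ t ∈ Ici s, g' t = -g t + (1 / t) * (∫ ξ in s..t, g ξ) + c / t)
    {t : ℝ} (ht : t ∈ Ici s) :
    t * g' t = exp (s - t) * (s * g' s) := by
  have hmul : EqOn (fun u => u * g' u) (fun u => -(u * g u) + (∫ ξ in s..u, g ξ) + c) (Ici s) :=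
    fun u hu => by
      have hu0 : u ≠ 0 := (hs.trans_le hu).ne'
      simp only [heq u hu]
      field_simp
  have hgc : ContinuousOn g (Ici s) := fun u hu => (hderiv u hu).continuousWithinAt
  refine eq_exp_sub_mul_of_hasDerivWithinAt_neg (f := fun u => u * g' u) (fun u hu => ?_) ht
  have hrhs : HasDerivWithinAt (fun u => -(u * g u) + (∫ ξ in s..u, g ξ) + c)
      (-(1 * g u + u * g' u) + g u) (Ici s) u :=
    (((hasDerivWithinAt_id u _).mul (hderiv u hu)).neg.add
      (hasDerivWithinAt_intervalIntegral_Ici hgc hu)).add_const c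
  exact (hrhs.congr_of_mem hmul hu).congr_deriv (by ring)

theorem eq_mul_exp_neg_div {c : ℝ} {g g' : ℝ → ℝ} (hs : 0 < s)
    (hderiv : ∀ t ∈ Ici s, HasDerivWithinAt g (g' t) (Ici s) t)
    (heq : ∀ t ∈ Ici s, g' t = -g t + (1 / t) * (∫ ξ in s..t, g ξ) + c / t)
    {t : ℝ} (ht : t ∈ Ici s) :
    g' t = g' s * s * exp s * (exp (-t) / t) := by
  have ht0 : t ≠ 0 := (hs.trans_le ht).ne'
  have h := mul_deriv_eq_exp_sub_mul hs hderiv heq ht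
  rw [exp_sub] at h
  rw [exp_neg]
  field_simp at h ⊢
  linarith

end

theorem stmt0_general (s c : ℝ) (hs : 0 < s) (g g' : ℝ → ℝ)
    (hderiv : ∀ t ∈ Set.Ici s, HasDerivWithinAt g (g' t) (Set.Ici s) t)
    (heq : ∀ t ∈ Set.Ici s,
      g' t = -g t + (1 / t) * (∫ ξ in s..t, g ξ) + c / t) :
    g' s = -g s + c / s ∧
    ∀ t ∈ Set.Ici s,
      g t = g' s * s * Real.exp s * (∫ ξ in s..t, Real.exp (-ξ) / ξ) + g s := by
  have hg' : ∀ t ∈ Ici s, g' t = g' s * s * exp s * (exp (-t) / t) :=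
    fun t ht => eq_mul_exp_neg_div hs hderiv heq ht
  refine ⟨by simpa using heq s self_mem_Ici, fun t ht => ?_⟩
  have hFTC := intervalIntegral.integral_eq_sub_of_hasDeriv_right_of_le ht
    (fun u hu => (hderiv u hu.1).continuousWithinAt.mono Icc_subset_Ici_self)
    (fun u hu => hg' u hu.1.le ▸ (hderiv u hu.1.le).mono (Ioi_subset_Ici hu.1.le))
    (ContinuousOn.intervalIntegrable (u := fun ξ => g' s * s * exp s * (exp (-ξ) / ξ))
      (fun ξ hξ => by
        have hξ0 : ξ ≠ 0 := (hs.trans_le (uIcc_of_le (mem_Ici.mp ht) ▸ hξ).1).ne'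
        fun_prop (disch := exact hξ0)))
  rw [intervalIntegral.integral_const_mul] at hFTC
  linarith

/-- Lemma 1 of the paper: if `g` is continuously differentiable on `[s,∞)` and satisfies
`g'(t) = -g(t) + (1/t)∫_s^t g(ξ)dξ + c/t` there, then `g'(s) = -g(s) + c/s` and
`g(t) = g'(s)·s·e^s·I(t,s) + g(s)` for all `t ≥ s`, where `I(t,s) = ∫_s^t e^{-ξ}/ξ dξ`. -/
theorem stmt0 (s c : ℝ) (hs : 0 < s) (g g' : ℝ → ℝ)
    (hderiv : ∀ t ∈ Set.Ici s, HasDerivWithinAt g (g' t) (Set.Ici s) t)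
    (hg'cont : ContinuousOn g' (Set.Ici s))
    (heq : ∀ t ∈ Set.Ici s,
      g' t = -g t + (1 / t) * (∫ ξ in s..t, g ξ) + c / t) :
    g' s = -g s + c / s ∧
    ∀ t ∈ Set.Ici s,
      g t = g' s * s * Real.exp s * (∫ ξ in s..t, Real.exp (-ξ) / ξ) + g s :=
  stmt0_general s c hs g g' hderiv heq
end

section
/- For every integer j ≥ 0 and every real t ≥ 0, the series Σ_{k=j}^∞ σ₂(k,j)·j!·(−1)^{k−j}·p_k(t) converges and its sum equals e^{−t}·t^j/j!. -/
open MeasureTheory ProbabilityTheory Real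

open MeasureTheory ProbabilityTheory Real

/-- Signless Stirling numbers of the first kind: coefficient of `x^j` in `x(x+1)⋯(x+k-1)`. -/
noncomputable def stirling1 (k j : ℕ) : ℝ :=
  (∏ i ∈ Finset.range k, (Polynomial.X + Polynomial.C (i : ℝ))).coeff j

/-- Stirling numbers of the second kind. -/
def stirling2 : ℕ → ℕ → ℕ
  | 0, 0 => 1
  | 0, _ + 1 => 0
  | _ + 1, 0 => 0
  | n + 1, k + 1 => (k + 1) * stirling2 n (k + 1) + stirling2 n k

/-- `p_j(t) = e^{-t} Σ_{k≥j} (t^k/k!) σ₁(k,j)/k!` (terms with `k<j` vanish). -/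
noncomputable def pfn (j : ℕ) (t : ℝ) : ℝ :=
  Real.exp (-t) * ∑' k : ℕ, t ^ k / (Nat.factorial k : ℝ) * (stirling1 k j / (Nat.factorial k : ℝ))

/-- `q_j(t) = e^{-t} Σ_{k≥0} (t^k/(k+1)!) Σ_{i=0}^k σ₁(i,j)/i!`. -/
noncomputable def qfn (j : ℕ) (t : ℝ) : ℝ :=
  Real.exp (-t) * ∑' k : ℕ, t ^ k / (Nat.factorial (k + 1) : ℝ) *
    ∑ i ∈ Finset.range (k + 1), stirling1 i j / (Nat.factorial i : ℝ)

/-- `I(t,s) = ∫_s^t e^{-ξ}/ξ dξ`. -/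
noncomputable def Ifun (t s : ℝ) : ℝ := ∫ ξ in s..t, Real.exp (-ξ) / ξ

/-- `I(s) = ∫_s^∞ e^{-ξ}/ξ dξ`. -/
noncomputable def Iinf (s : ℝ) : ℝ := ∫ ξ in Set.Ioi s, Real.exp (-ξ) / ξ

/-- `I₂(t,s) = ∫_s^t e^{-ξ}/ξ² dξ`. -/
noncomputable def I2fun (t s : ℝ) : ℝ := ∫ ξ in s..t, Real.exp (-ξ) / ξ ^ 2

/-- `I₂(s) = ∫_s^∞ e^{-ξ}/ξ² dξ`. -/
noncomputable def I2inf (s : ℝ) : ℝ := ∫ ξ in Set.Ioi s, Real.exp (-ξ) / ξ ^ 2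

/-- `J(t) = ∫_0^t (e^ξ - 1)/ξ dξ`. -/
noncomputable def Jfun (t : ℝ) : ℝ := ∫ ξ in (0:ℝ)..t, (Real.exp ξ - 1) / ξ

/-!
Expanding every `p_{j+m}` into its defining power series turns the series into the double series
`Σ_{m,k} (-1)^m σ₂(j+m,j) σ₁(k,j+m) j! e^{-t} t^k / k!²`. It converges absolutely, since
`σ₂(n,j) ≤ (j+1)^n` and `Σ_n σ₁(k,n) = k!` bound the `k`-th column by
`j! e^{-t} ((j+1)|t|)^k / k!`.
Summing the columns first, Stirling inversion `Σ_n (-1)^n σ₁(k,n) σ₂(n,j) = (-1)^k [k = j]`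
kills every column except `k = j`, which contributes `e^{-t} t^j / j!`.
-/

open Polynomial Finset
open scoped Nat

lemma prod_range_X_add_C_eq_ascPochhammer (R : Type*) [CommSemiring R] (k : ℕ) :
    ∏ i ∈ range k, (X + C (i : R)) = ascPochhammer R k := by
  induction k with
  | zero => simp
  | succ k ih => rw [prod_range_succ, ih, ascPochhammer_succ_right, map_natCast]

lemma stirling1_eq_coeff_ascPochhammer (k j : ℕ) :
    stirling1 k j = ((ascPochhammer ℕ k).coeff j : ℝ) := by
  rw [stirling1, prod_range_X_add_C_eq_ascPochhammer, ← ascPochhammer_map (Nat.castRingHom ℝ),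
    coeff_map, eq_natCast]

lemma stirling1_nonneg (k j : ℕ) : 0 ≤ stirling1 k j := by
  rw [stirling1_eq_coeff_ascPochhammer]
  positivity

lemma stirling1_eq_zero_of_lt {k j : ℕ} (h : k < j) : stirling1 k j = 0 := by
  rw [stirling1_eq_coeff_ascPochhammer, coeff_eq_zero_of_natDegree_lt, Nat.cast_zero]
  rwa [ascPochhammer_natDegree]

lemma stirling1_succ_zero (k : ℕ) : stirling1 (k + 1) 0 = 0 := by
  rw [stirling1_eq_coeff_ascPochhammer, coeff_zero_eq_eval_zero,
    ascPochhammer_ne_zero_eval_zero (S := ℕ) k.succ_ne_zero, Nat.cast_zero]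

lemma stirling1_succ_succ (k j : ℕ) :
    stirling1 (k + 1) (j + 1) = k * stirling1 k (j + 1) + stirling1 k j := by
  simp only [stirling1_eq_coeff_ascPochhammer, ascPochhammer_succ_right, mul_add, coeff_add,
    coeff_mul_X, coeff_mul_natCast]
  push_cast
  ring

lemma sum_range_stirling1 {k N : ℕ} (h : k < N) :
    ∑ n ∈ range N, stirling1 k n = k ! := by
  have hdeg : (ascPochhammer ℕ k).natDegree < N := by rwa [ascPochhammer_natDegree]
  simp only [stirling1_eq_coeff_ascPochhammer]
  have heval := ascPochhammer_eval_one ℕ k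
  rw [eval_eq_sum_range' hdeg] at heval
  simp only [one_pow, mul_one, Nat.cast_id] at heval
  exact_mod_cast heval

lemma stirling2_eq_stirlingSecond : stirling2 = Nat.stirlingSecond := by
  ext n j
  induction n generalizing j with
  | zero => cases j <;> rfl
  | succ n ih =>
    cases j with
    | zero => rfl
    | succ j => rw [stirling2, Nat.stirlingSecond_succ_succ, ih, ih]

lemma Nat.stirlingSecond_le_pow (n j : ℕ) : n.stirlingSecond j ≤ (j + 1) ^ n := by
  induction n generalizing j with
  | zero => cases j <;> simp
  | succ n ih =>
    cases j with
    | zero => simp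
    | succ j =>
      rw [Nat.stirlingSecond_succ_succ, pow_succ']
      have h1 := ih (j + 1)
      have h2 := (ih j).trans (Nat.pow_le_pow_left j.succ.le_succ n)
      nlinarith

lemma sum_range_neg_one_pow_mul_stirling1_mul_stirlingSecond {k N : ℕ} (hN : k < N) (j : ℕ) :
    ∑ n ∈ range N, (-1 : ℝ) ^ n * stirling1 k n * n.stirlingSecond j =
      if k = j then (-1) ^ k else 0 := by
  obtain ⟨M, rfl⟩ : ∃ M, N = M + 1 := ⟨N - 1, by omega⟩
  induction k generalizing j M with
  | zero =>
    rw [sum_range_succ', sum_eq_zero fun n _ => by rw [stirling1_eq_zero_of_lt n.succ_pos]; ring]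
    cases j <;> simp [stirling1_eq_coeff_ascPochhammer]
  | succ k ih =>
    rw [sum_range_succ', stirling1_succ_zero]
    cases j with
    | zero => simp
    | succ j =>
      obtain ⟨L, rfl⟩ : ∃ L, M = L + 1 := ⟨M - 1, by omega⟩
      have hA := ih (j + 1) L (by omega)
      have hB := ih j L (by omega)
      have hshift := ih (j + 1) (L + 1) (by omega)
      rw [sum_range_succ'] at hshift
      have hterm : ∀ n ∈ range (L + 1),
          (-1 : ℝ) ^ (n + 1) * stirling1 (k + 1) (n + 1) * (n + 1).stirlingSecond (j + 1) =
            k * ((-1) ^ (n + 1) * stirling1 k (n + 1) * (n + 1).stirlingSecond (j + 1)) -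
              (j + 1) * ((-1) ^ n * stirling1 k n * n.stirlingSecond (j + 1)) -
              (-1) ^ n * stirling1 k n * n.stirlingSecond j := by
        intro n _
        rw [stirling1_succ_succ, Nat.stirlingSecond_succ_succ]
        push_cast
        ring
      rw [sum_congr rfl hterm, sum_sub_distrib, sum_sub_distrib, ← mul_sum, ← mul_sum, hA, hB]
      simp only [Nat.stirlingSecond_zero_succ, Nat.cast_zero, mul_zero, add_zero] at hshift
      rw [hshift]
      split_ifs <;> first | omega | (subst_vars; push_cast; ring)

lemma sum_range_neg_one_pow_mul_stirlingSecond_mul_stirling1 {k N : ℕ} (j : ℕ)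
    (hN : k < j + N) :
    ∑ m ∈ range N, (-1 : ℝ) ^ m * (j + m).stirlingSecond j * stirling1 k (j + m) =
      if k = j then 1 else 0 := by
  have h := sum_range_neg_one_pow_mul_stirling1_mul_stirlingSecond hN j
  rw [sum_range_add, sum_eq_zero fun n hn => by
    rw [Nat.stirlingSecond_eq_zero_of_lt (mem_range.1 hn), Nat.cast_zero, mul_zero], zero_add] at h
  have hpow : ((-1 : ℝ) ^ j) ^ 2 = 1 := by
    rw [← pow_mul, mul_comm, pow_mul, neg_one_sq, one_pow]
  calc _ = (-1) ^ j * ∑ m ∈ range N, (-1 : ℝ) ^ (j + m) * stirling1 k (j + m) *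
        (j + m).stirlingSecond j := by
        rw [mul_sum]
        refine sum_congr rfl fun m _ => ?_
        linear_combination
          (-(-1) ^ m * ((j + m).stirlingSecond j : ℝ) * stirling1 k (j + m)) * hpow
    _ = _ := by
      rw [h]
      split_ifs with hkj
      · rw [hkj, ← sq, hpow]
      · rw [mul_zero]

lemma stirling1_le_factorial (k n : ℕ) : stirling1 k n ≤ k ! := by
  rcases lt_or_ge k n with h | h
  · rw [stirling1_eq_zero_of_lt h]
    positivity
  · calc stirling1 k n ≤ ∑ i ∈ range (k + 1), stirling1 k i :=
          single_le_sum (fun i _ => stirling1_nonneg k i) (mem_range.2 (Nat.lt_succ_of_le h))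
      _ = k ! := sum_range_stirling1 k.lt_succ_self

lemma sum_range_stirling1_add_le (j k N : ℕ) :
    ∑ m ∈ range N, stirling1 k (j + m) ≤ k ! := by
  calc ∑ m ∈ range N, stirling1 k (j + m)
      ≤ ∑ m ∈ range (N + k + 1), stirling1 k (j + m) :=
        sum_le_sum_of_subset_of_nonneg (range_subset_range.2 (by omega))
          fun _ _ _ => stirling1_nonneg _ _
    _ ≤ ∑ n ∈ range j, stirling1 k n + ∑ m ∈ range (N + k + 1), stirling1 k (j + m) :=
        le_add_of_nonneg_left (sum_nonneg fun _ _ => stirling1_nonneg _ _)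
    _ = k ! := by rw [← sum_range_add, sum_range_stirling1 (by omega)]

lemma sum_range_stirlingSecond_mul_stirling1_le (j k N : ℕ) :
    ∑ m ∈ range N, ((j + m).stirlingSecond j : ℝ) * stirling1 k (j + m) ≤
      (j + 1) ^ k * k ! := by
  have hterm : ∀ m ∈ range N, ((j + m).stirlingSecond j : ℝ) * stirling1 k (j + m) ≤
      (j + 1) ^ k * stirling1 k (j + m) := by
    intro m _
    rcases lt_or_ge k (j + m) with h | h
    · simp [stirling1_eq_zero_of_lt h]
    · refine mul_le_mul_of_nonneg_right ?_ (stirling1_nonneg _ _)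
      calc ((j + m).stirlingSecond j : ℝ) ≤ (j + 1) ^ (j + m) := by
            exact_mod_cast Nat.stirlingSecond_le_pow (j + m) j
        _ ≤ (j + 1) ^ k := pow_le_pow_right₀ (by linarith [j.cast_nonneg (α := ℝ)]) h
  calc _ ≤ ∑ m ∈ range N, ((j : ℝ) + 1) ^ k * stirling1 k (j + m) := sum_le_sum hterm
    _ ≤ (j + 1) ^ k * k ! := by
      rw [← mul_sum]
      exact mul_le_mul_of_nonneg_left (sum_range_stirling1_add_le j k N) (by positivity)

lemma Summable.hasSum_of_hasSum_fiberwise_swap {α β M : Type*} [AddCommMonoid M]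
    [TopologicalSpace M] [ContinuousAdd M] [T3Space M] {f : α × β → M} (hf : Summable f)
    {r : α → M} {c : β → M} {s : M} (hr : ∀ a, HasSum (fun b => f (a, b)) (r a))
    (hc : ∀ b, HasSum (fun a => f (a, b)) (c b)) (hs : HasSum c s) : HasSum r s := by
  have hrow := hf.hasSum.prod_fiberwise hr
  have hcol := hf.prod_symm.hasSum.prod_fiberwise hc
  have hswap : ∑' p : β × α, f p.swap = ∑' p, f p := (Equiv.prodComm β α).tsum_eq f
  rwa [hs.unique (hswap ▸ hcol)]

lemma hasSum_pfn (n : ℕ) (t : ℝ) :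
    HasSum (fun k => exp (-t) * (t ^ k / k ! * (stirling1 k n / k !))) (pfn n t) := by
  refine (Summable.hasSum ?_).mul_left (exp (-t))
  refine Summable.of_norm_bounded (Real.summable_pow_div_factorial |t|) fun k => ?_
  have hs : 0 ≤ stirling1 k n / k ! := div_nonneg (stirling1_nonneg k n) (by positivity)
  have hs1 : stirling1 k n / k ! ≤ 1 :=
    div_le_one_of_le₀ (stirling1_le_factorial k n) (by positivity)
  rw [norm_mul, Real.norm_of_nonneg hs, norm_div, norm_pow, Real.norm_natCast, Real.norm_eq_abs]
  exact mul_le_of_le_one_right (by positivity) hs1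

noncomputable def inversionDoubleTerm (j : ℕ) (t : ℝ) (p : ℕ × ℕ) : ℝ :=
  (-1) ^ p.1 * (j + p.1).stirlingSecond j * stirling1 p.2 (j + p.1) *
    (j ! * exp (-t) * t ^ p.2 / p.2 ! ^ 2)

section inversionDoubleTerm

variable (j : ℕ) (t : ℝ)

lemma inversionDoubleTerm_eq_zero_of_lt {m k : ℕ} (h : k < j + m) :
    inversionDoubleTerm j t (m, k) = 0 := by
  simp [inversionDoubleTerm, stirling1_eq_zero_of_lt h]

lemma hasSum_inversionDoubleTerm_fst (m : ℕ) :
    HasSum (fun k => inversionDoubleTerm j t (m, k))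
      (((j + m).stirlingSecond j : ℝ) * j ! * (-1) ^ m * pfn (j + m) t) := by
  refine ((hasSum_pfn (j + m) t).mul_left _).congr_fun fun k => ?_
  simp only [inversionDoubleTerm]
  ring

lemma hasSum_inversionDoubleTerm_snd (k : ℕ) :
    HasSum (fun m => inversionDoubleTerm j t (m, k))
      (if k = j then exp (-t) * t ^ j / j ! else 0) := by
  have h : HasSum (fun m => (-1 : ℝ) ^ m * (j + m).stirlingSecond j * stirling1 k (j + m))
      (∑ m ∈ range (k + 1), (-1 : ℝ) ^ m * (j + m).stirlingSecond j * stirling1 k (j + m)) :=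
    hasSum_sum_of_ne_finset_zero fun m hm => by
      rw [stirling1_eq_zero_of_lt (by simp at hm; omega), mul_zero]
  rw [sum_range_neg_one_pow_mul_stirlingSecond_mul_stirling1 j (by omega)] at h
  have hval : (if k = j then exp (-t) * t ^ j / j ! else 0) =
      (if k = j then 1 else 0) * (j ! * exp (-t) * t ^ k / k ! ^ 2) := by
    split_ifs with hkj
    · subst hkj
      field_simp
    · rw [zero_mul]
  rw [hval]
  exact (h.mul_right _).congr_fun fun m => rfl

lemma norm_inversionDoubleTerm (m k : ℕ) :
    ‖inversionDoubleTerm j t (m, k)‖ =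
      (j + m).stirlingSecond j * stirling1 k (j + m) * (j ! * exp (-t) * |t| ^ k / k ! ^ 2) := by
  simp only [inversionDoubleTerm, norm_mul, norm_div, norm_pow, norm_neg, norm_one, one_pow,
    one_mul, Real.norm_eq_abs, Nat.abs_cast, abs_exp, abs_of_nonneg (stirling1_nonneg _ _)]

lemma summable_inversionDoubleTerm : Summable (inversionDoubleTerm j t) := by
  refine Summable.of_norm ?_
  have hfin (k : ℕ) : ∀ m ∉ range (k + 1), ‖inversionDoubleTerm j t (m, k)‖ = 0 :=
    fun m hm => by
      rw [inversionDoubleTerm_eq_zero_of_lt j t (by simp at hm; omega), norm_zero]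
  have hbound (k : ℕ) : ∑' m, ‖inversionDoubleTerm j t (m, k)‖ ≤
      j ! * exp (-t) * (((j + 1) * |t|) ^ k / k !) := by
    rw [tsum_eq_sum (hfin k)]
    simp only [norm_inversionDoubleTerm, ← sum_mul]
    calc _ ≤ (j + 1) ^ k * k ! * (j ! * exp (-t) * |t| ^ k / k ! ^ 2) :=
          mul_le_mul_of_nonneg_right (sum_range_stirlingSecond_mul_stirling1_le j k _)
            (by positivity)
      _ = _ := by rw [mul_pow]; field_simp
  refine ((summable_prod_of_nonneg (f := fun p : ℕ × ℕ => ‖inversionDoubleTerm j t p.swap‖)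
    fun _ => norm_nonneg _).2 ⟨fun k => ?_, ?_⟩).prod_symm
  · exact summable_of_ne_finset_zero (hfin k)
  · exact Summable.of_nonneg_of_le (fun _ => tsum_nonneg fun _ => norm_nonneg _) hbound
      ((Real.summable_pow_div_factorial _).mul_left _)

end inversionDoubleTerm

theorem stmt1_general (j : ℕ) (t : ℝ) :
    HasSum (fun k : ℕ =>
        (stirling2 (j + k) j : ℝ) * (Nat.factorial j : ℝ) * (-1) ^ k * pfn (j + k) t)
      (Real.exp (-t) * t ^ j / (Nat.factorial j : ℝ)) := by
  rw [stirling2_eq_stirlingSecond]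
  exact (summable_inversionDoubleTerm j t).hasSum_of_hasSum_fiberwise_swap
    (hasSum_inversionDoubleTerm_fst j t) (hasSum_inversionDoubleTerm_snd j t) (hasSum_ite_eq j _)

/-- Inversion formula (Lemma 2 of the paper): for every `j ≥ 0` and `t ≥ 0`,
`Σ_{k=j}^∞ σ₂(k,j)·j!·(-1)^{k-j}·p_k(t)` converges with sum `e^{-t} t^j / j!`. -/
theorem stmt1 (j : ℕ) (t : ℝ) (ht : 0 ≤ t) :
    HasSum (fun k : ℕ =>
        (stirling2 (j + k) j : ℝ) * (Nat.factorial j : ℝ) * (-1) ^ k * pfn (j + k) t)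
      (Real.exp (-t) * t ^ j / (Nat.factorial j : ℝ)) :=
  stmt1_general j t
end

section
/- Let s > 0 and c ∈ ℝ, and let g : [s, ∞) → ℝ be continuously differentiable and satisfy, for all t ≥ s, the integro-differential equation g'(t) = −g(t)·(1 + 1/t) + (1/t)·∫_s^t g(ξ) dξ + c/t. Then g'(s) = c/s − (1 + 1/s)·g(s), and for all t ≥ s one has g(t) = g'(s)·s²·e^s·I₂(t,s) + g(s). -/
/-!
Multiplied by `t`, the equation reads `t g'(t) = c + ∫_s^t g - (t + 1) g(t)`. The right-hand side
is differentiable, and `t eᵗ (c + ∫_s^t g - (t + 1) g(t))` has derivative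
`eᵗ (t + 1) (t g'(t) - t g'(t)) = 0`. Hence `t² eᵗ g'(t)` is constant, i.e.
`g'(t) = g'(s) s² eˢ e⁻ᵗ / t²`, and integrating `g'` from `s` to `t` gives the formula for `g`.
-/

open MeasureTheory Real Set

theorem hasDerivWithinAt_integral_Ici {E : Type*} [NormedAddCommGroup E] [NormedSpace ℝ E]
    [CompleteSpace E] {f : ℝ → E} {a b : ℝ} (hf : ContinuousOn f (Ici a)) (hb : a ≤ b) :
    HasDerivWithinAt (fun u => ∫ x in a..u, f x) (f b) (Ici a) b := by
  have hbJ : Fact (b ∈ Icc a (b + 1)) := ⟨hb, by linarith⟩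
  have hfJ : ContinuousOn f (Icc a (b + 1)) := hf.mono Icc_subset_Ici_self
  have hint : IntervalIntegrable f volume a b :=
    (hfJ.mono (by rw [uIcc_of_le hb]; exact Icc_subset_Icc_right (by linarith))).intervalIntegrable
  refine (intervalIntegral.integral_hasDerivWithinAt_right (s := Icc a (b + 1))
    (t := Icc a (b + 1)) hint
    (hfJ.stronglyMeasurableAtFilter_nhdsWithin measurableSet_Icc b)
    (hfJ b hbJ.out)).mono_of_mem_nhdsWithin ?_
  rw [← Ici_inter_Iic]
  exact inter_mem_nhdsWithin _ (Iic_mem_nhds (by linarith))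

section IntegroDifferential

variable {s c : ℝ} {g g' : ℝ → ℝ}

theorem mul_deriv_eq_of_integro_differential (hs : 0 < s)
    (heq : ∀ t ∈ Ici s, g' t = -g t * (1 + 1 / t) + (1 / t) * (∫ ξ in s..t, g ξ) + c / t)
    {t : ℝ} (ht : t ∈ Ici s) :
    t * g' t = c + (∫ ξ in s..t, g ξ) - (t + 1) * g t := by
  have htpos : 0 < t := hs.trans_le ht
  rw [heq t ht]
  field_simp
  ring

theorem sq_mul_exp_mul_deriv_eq_of_integro_differential (hs : 0 < s)
    (hderiv : ∀ t ∈ Ici s, HasDerivWithinAt g (g' t) (Ici s) t)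
    (heq : ∀ t ∈ Ici s, g' t = -g t * (1 + 1 / t) + (1 / t) * (∫ ξ in s..t, g ξ) + c / t)
    {t : ℝ} (ht : t ∈ Ici s) :
    t ^ 2 * exp t * g' t = s ^ 2 * exp s * g' s := by
  set h : ℝ → ℝ := fun u => u * exp u * (c + (∫ ξ in s..u, g ξ) - (u + 1) * g u)
  have hh : ∀ u ∈ Ici s, u ^ 2 * exp u * g' u = h u := fun u hu => by
    simp only [h, ← mul_deriv_eq_of_integro_differential hs heq hu]
    ring
  have hgcont : ContinuousOn g (Ici s) := fun u hu => (hderiv u hu).continuousWithinAt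
  have hh' : ∀ u ∈ Ici s, HasDerivWithinAt h 0 (Ici s) u := by
    intro u hu
    have hd := ((((hasDerivWithinAt_id u _).mul (hasDerivAt_exp u).hasDerivWithinAt).mul
      (((hasDerivWithinAt_integral_Ici hgcont hu).const_add c).sub
        (((hasDerivWithinAt_id u _).add_const 1).mul (hderiv u hu)))))
    refine hd.congr_deriv ?_
    simp only [Pi.mul_apply, Pi.sub_apply, id]
    linear_combination (-(exp u * (u + 1))) * mul_deriv_eq_of_integro_differential hs heq hu
  have hconst := constant_of_has_deriv_right_zero
    (fun u hu => (hh' u hu.1).continuousWithinAt.mono Icc_subset_Ici_self)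
    (fun u hu => (hh' u hu.1).mono (Ici_subset_Ici.2 hu.1)) t ⟨ht, le_rfl⟩
  rw [hh t ht, hh s self_mem_Ici, hconst]

theorem deriv_eq_of_integro_differential (hs : 0 < s)
    (hderiv : ∀ t ∈ Ici s, HasDerivWithinAt g (g' t) (Ici s) t)
    (heq : ∀ t ∈ Ici s, g' t = -g t * (1 + 1 / t) + (1 / t) * (∫ ξ in s..t, g ξ) + c / t)
    {t : ℝ} (ht : t ∈ Ici s) :
    g' t = g' s * s ^ 2 * exp s * (exp (-t) / t ^ 2) := by
  have htpos : 0 < t := hs.trans_le ht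
  have hconst := sq_mul_exp_mul_deriv_eq_of_integro_differential hs hderiv heq ht
  rw [exp_neg]
  field_simp
  linear_combination hconst

end IntegroDifferential

theorem stmt2_general (s c : ℝ) (hs : 0 < s) (g g' : ℝ → ℝ)
    (hderiv : ∀ t ∈ Set.Ici s, HasDerivWithinAt g (g' t) (Set.Ici s) t)
    (heq : ∀ t ∈ Set.Ici s,
      g' t = -g t * (1 + 1 / t) + (1 / t) * (∫ ξ in s..t, g ξ) + c / t) :
    g' s = c / s - (1 + 1 / s) * g s ∧
    ∀ t ∈ Set.Ici s,
      g t = g' s * s ^ 2 * Real.exp s * (∫ ξ in s..t, Real.exp (-ξ) / ξ ^ 2) + g s := by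
  refine ⟨by rw [heq s self_mem_Ici, intervalIntegral.integral_same]; ring, fun t ht => ?_⟩
  have hcont : ContinuousOn (fun ξ => exp (-ξ) / ξ ^ 2) (Icc s t) :=
    ContinuousOn.div (by fun_prop) (by fun_prop) fun ξ hξ => (pow_pos (hs.trans_le hξ.1) 2).ne'
  have hftc := intervalIntegral.integral_eq_sub_of_hasDeriv_right_of_le ht
    (fun u hu => (hderiv u hu.1).continuousWithinAt.mono Icc_subset_Ici_self)
    (fun u hu => ((hderiv u hu.1.le).mono (Ioi_subset_Ici hu.1.le)).congr_deriv
      (deriv_eq_of_integro_differential hs hderiv heq hu.1.le))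
    ((hcont.intervalIntegrable_of_Icc ht).const_mul (g' s * s ^ 2 * exp s))
  rw [intervalIntegral.integral_const_mul] at hftc
  linarith

/-- Lemma 3 of the paper: if `g` is continuously differentiable on `[s,∞)` and satisfies
`g'(t) = -g(t)(1 + 1/t) + (1/t)∫_s^t g(ξ)dξ + c/t` there, then
`g'(s) = c/s - (1 + 1/s)g(s)` and `g(t) = g'(s)·s²·e^s·I₂(t,s) + g(s)` for all `t ≥ s`,
where `I₂(t,s) = ∫_s^t e^{-ξ}/ξ² dξ`. -/
theorem stmt2 (s c : ℝ) (hs : 0 < s) (g g' : ℝ → ℝ)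
    (hderiv : ∀ t ∈ Set.Ici s, HasDerivWithinAt g (g' t) (Set.Ici s) t)
    (hg'cont : ContinuousOn g' (Set.Ici s))
    (heq : ∀ t ∈ Set.Ici s,
      g' t = -g t * (1 + 1 / t) + (1 / t) * (∫ ξ in s..t, g ξ) + c / t) :
    g' s = c / s - (1 + 1 / s) * g s ∧
    ∀ t ∈ Set.Ici s,
      g t = g' s * s ^ 2 * Real.exp s * (∫ ξ in s..t, Real.exp (-ξ) / ξ ^ 2) + g s :=
  stmt2_general s c hs g g' hderiv heq
end

section
/- Fix u₁, u₂ ∈ (0,1]. Let E₁, E₂ be i.i.d. standard exponential (rate 1) random variables and let V be uniform on [0,1], with E₁, E₂, V jointly independent. Then the random variable E₁/u₁ + (E₂/(u₁u₂))·1_{{V > u₂}} has the exponential distribution with rate u₁u₂, i.e. the same law as E/(u₁u₂) for a standard exponential random variable E. -/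
/-!
Condition on the event `V ≤ u₂`. On it the variable is `E₁/u₁ ~ Exp(u₁)`; off it, it is the sum
of independent `Exp(u₁)` and `Exp(u₁u₂)` variables, and for independent `Exp(a)`, `Exp(c)` the sum
has tail `(c e^{-ax} - a e^{-cx}) / (c - a)`. With `a = u₁`, `c = u₁u₂` the mixture
`u₂ e^{-ax} + (1 - u₂) (c e^{-ax} - a e^{-cx}) / (c - a)` collapses to `e^{-cx}`.
-/

open MeasureTheory ProbabilityTheory Real Set

lemma mul_integral_exp_mul (k x : ℝ) : k * ∫ s in 0..x, exp (k * s) = exp (k * x) - 1 := by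
  rw [intervalIntegral.mul_integral_comp_mul_left, integral_exp, mul_zero, exp_zero]

namespace ProbabilityTheory

lemma expMeasure_eq_withDensity (r : ℝ) :
    expMeasure r =
      (volume.restrict (Ici 0)).withDensity fun t ↦ ENNReal.ofReal (r * exp (-(r * t))) := by
  rw [← withDensity_indicator measurableSet_Ici]
  change volume.withDensity (exponentialPDF r) = _
  congr 1
  funext t
  by_cases ht : 0 ≤ t <;> simp [exponentialPDF_eq, ht]

lemma expMeasure_real_Ioi {r : ℝ} (hr : 0 < r) (x : ℝ) :
    (expMeasure r).real (Ioi x) = exp (-(r * max x 0)) := by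
  have := isProbabilityMeasure_expMeasure hr
  rw [← compl_Iic, probReal_compl_eq_one_sub measurableSet_Iic, ← cdf_eq_real,
    cdf_expMeasure_eq hr]
  split_ifs with hx
  · simp [max_eq_left hx]
  · simp [max_eq_right (not_le.1 hx).le]

lemma setIntegral_Iic_expMeasure {r x : ℝ} (hr : 0 ≤ r) (hx : 0 ≤ x) (f : ℝ → ℝ) :
    ∫ s in Iic x, f s ∂expMeasure r = ∫ s in 0..x, r * exp (-(r * s)) * f s := by
  rw [expMeasure_eq_withDensity, setIntegral_withDensity_eq_setIntegral_toReal_smul (by fun_prop)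
    (by simp) _ measurableSet_Iic, Measure.restrict_restrict measurableSet_Iic, Iic_inter_Ici,
    integral_Icc_eq_integral_Ioc, ← intervalIntegral.integral_of_le hx]
  simp only [smul_eq_mul, ENNReal.toReal_ofReal (mul_nonneg hr (exp_pos _).le)]

lemma measureReal_prod_lt_add {ν ρ : Measure ℝ} [SFinite ν] [IsFiniteMeasure ρ] (x : ℝ) :
    (ν.prod ρ).real {p | x < p.1 + p.2} = ∫ s, ρ.real (Ioi (x - s)) ∂ν := by
  have hS : MeasurableSet {p : ℝ × ℝ | x < p.1 + p.2} :=
    measurableSet_lt measurable_const (by fun_prop)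
  have hsec (s : ℝ) : Prod.mk s ⁻¹' {p : ℝ × ℝ | x < p.1 + p.2} = Ioi (x - s) := by
    ext t; simp [sub_lt_iff_lt_add']
  rw [measureReal_def, Measure.prod_apply hS, ← integral_toReal
    (measurable_measure_prodMk_left hS).aemeasurable (.of_forall fun _ ↦ measure_lt_top _ _)]
  simp_rw [hsec]
  rfl

/-- Stated with the factor `c - a` so that it also covers `a = c`. -/
lemma sub_mul_expMeasure_prod_real_lt_add {a c : ℝ} (ha : 0 < a) (hc : 0 < c) {x : ℝ}
    (hx : 0 ≤ x) :
    (c - a) * ((expMeasure a).prod (expMeasure c)).real {p | x < p.1 + p.2} =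
      c * exp (-(a * x)) - a * exp (-(c * x)) := by
  have := isProbabilityMeasure_expMeasure ha
  have := isProbabilityMeasure_expMeasure hc
  set g : ℝ → ℝ := fun s ↦ exp (-(c * max (x - s) 0))
  have hg_int : Integrable g (expMeasure a) := by
    refine .of_bound (by fun_prop) 1 (.of_forall fun s ↦ ?_)
    rw [norm_of_nonneg (exp_pos _).le, exp_le_one_iff, neg_nonpos]
    positivity
  have hprod : ((expMeasure a).prod (expMeasure c)).real {p | x < p.1 + p.2} =
      ∫ s, g s ∂expMeasure a := by
    simp_rw [measureReal_prod_lt_add, expMeasure_real_Ioi hc, g]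
  have hfar : ∫ s in Ioi x, g s ∂expMeasure a = exp (-(a * x)) := by
    rw [setIntegral_congr_fun measurableSet_Ioi (g := fun _ ↦ 1)
      (fun s (hs : x < s) ↦ by simp [g, hs.le]),
      setIntegral_const, smul_eq_mul, mul_one, expMeasure_real_Ioi ha, max_eq_left hx]
  have hnear : ∫ s in Iic x, g s ∂expMeasure a =
      a * exp (-(c * x)) * ∫ s in 0..x, exp ((c - a) * s) := by
    rw [setIntegral_congr_fun measurableSet_Iic (g := fun s ↦ exp (-(c * (x - s))))
      (fun s (hs : s ≤ x) ↦ by simp [g, hs]),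
      setIntegral_Iic_expMeasure ha.le hx, ← intervalIntegral.integral_const_mul]
    congr 1 with s
    rw [mul_assoc, mul_assoc, ← exp_add, ← exp_add]
    ring_nf
  have hexp : exp ((c - a) * x) * exp (-(c * x)) = exp (-(a * x)) := by
    rw [← exp_add]; ring_nf
  rw [hprod, ← integral_add_compl measurableSet_Iic hg_int, compl_Iic, hnear, hfar]
  linear_combination a * exp (-(c * x)) * mul_integral_exp_mul (c - a) x + a * hexp

section RandomVariables

variable {Ω : Type*} [MeasurableSpace Ω] {μ : Measure Ω}

lemma map_eq_expMeasure_of_tail [IsProbabilityMeasure μ] {X : Ω → ℝ} {r : ℝ} (hr : 0 < r)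
    (hX : Measurable X)
    (hX_tail : ∀ x, 0 ≤ x → μ {ω | x < X ω} = ENNReal.ofReal (exp (-(r * x)))) :
    μ.map X = expMeasure r := by
  have := isProbabilityMeasure_expMeasure hr
  have := Measure.isProbabilityMeasure_map (μ := μ) hX.aemeasurable
  have hcdf (x : ℝ) (hx : 0 ≤ x) : μ.real (X ⁻¹' Iic x) = 1 - exp (-(r * x)) := by
    rw [← compl_Ioi, preimage_compl, probReal_compl_eq_one_sub (hX measurableSet_Ioi)]
    exact congrArg (1 - ·) <|
      (congrArg ENNReal.toReal (hX_tail x hx)).trans (ENNReal.toReal_ofReal (exp_pos _).le)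
  refine Measure.eq_of_cdf _ _ (StieltjesFunction.ext fun x ↦ ?_)
  rw [cdf_eq_real, map_measureReal_apply hX measurableSet_Iic, cdf_expMeasure_eq hr]
  split_ifs with hx
  · exact hcdf x hx
  · have hle : μ.real (X ⁻¹' Iic x) ≤ μ.real (X ⁻¹' Iic 0) :=
      measureReal_mono (preimage_mono (Iic_subset_Iic.2 (not_le.1 hx).le))
    have h0 := hcdf 0 le_rfl
    rw [mul_zero, neg_zero, exp_zero, sub_self] at h0
    exact le_antisymm (h0 ▸ hle) measureReal_nonneg

lemma map_div_eq_expMeasure_of_tail [IsProbabilityMeasure μ] {E : Ω → ℝ} {r : ℝ} (hr : 0 < r)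
    (hE : Measurable E)
    (hE_tail : ∀ x, 0 ≤ x → μ {ω | x < E ω} = ENNReal.ofReal (exp (-x))) :
    μ.map (fun ω ↦ E ω / r) = expMeasure r :=
  map_eq_expMeasure_of_tail hr (hE.div_const r) fun x hx ↦ by
    simpa only [lt_div_iff₀ hr, mul_comm x] using hE_tail (r * x) (by positivity)

lemma measureReal_preimage_Iic_of_uniform [IsProbabilityMeasure μ] {V : Ω → ℝ}
    (hV_meas : Measurable V)
    (hV : ∀ a b, 0 ≤ a → a ≤ b → b ≤ 1 → μ {ω | V ω ∈ Icc a b} = ENNReal.ofReal (b - a))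
    {u : ℝ} (hu₀ : 0 ≤ u) (hu₁ : u ≤ 1) :
    μ.real (V ⁻¹' Iic u) = u := by
  have hV_real (a b : ℝ) (ha : 0 ≤ a) (hab : a ≤ b) (hb : b ≤ 1) :
      μ.real (V ⁻¹' Icc a b) = b - a := by
    rw [measureReal_def, preimage, hV a b ha hab hb, ENNReal.toReal_ofReal (sub_nonneg.2 hab)]
  have hlow : u ≤ μ.real (V ⁻¹' Iic u) := by
    calc u = μ.real (V ⁻¹' Icc 0 u) := by rw [hV_real 0 u le_rfl hu₀ hu₁, sub_zero]
      _ ≤ μ.real (V ⁻¹' Iic u) := measureReal_mono (preimage_mono Icc_subset_Iic_self)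
  have hhigh : 1 - u ≤ 1 - μ.real (V ⁻¹' Iic u) := by
    have hsub : Icc u 1 ⊆ Icc u u ∪ Ioi u := fun t ht ↦
      (eq_or_lt_of_le ht.1).imp (fun h ↦ ⟨h.le, h.ge⟩) id
    calc 1 - u = μ.real (V ⁻¹' Icc u 1) := (hV_real u 1 hu₀ hu₁ le_rfl).symm
      _ ≤ μ.real (V ⁻¹' Icc u u) + μ.real (V ⁻¹' Ioi u) :=
        (measureReal_mono (preimage_mono hsub)).trans (measureReal_union_le _ _)
      _ = 1 - μ.real (V ⁻¹' Iic u) := by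
        rw [hV_real u u hu₀ le_rfl hu₁, sub_self, zero_add, ← compl_Iic, preimage_compl,
          probReal_compl_eq_one_sub (hV_meas measurableSet_Iic)]
  linarith

lemma sub_mul_measureReal_lt_add_of_indepFun [IsFiniteMeasure μ] {X Y : Ω → ℝ} {a c x : ℝ}
    (ha : 0 < a) (hc : 0 < c) (hx : 0 ≤ x) (hX : Measurable X) (hY : Measurable Y)
    (hXY : IndepFun X Y μ)
    (hX_law : μ.map X = expMeasure a) (hY_law : μ.map Y = expMeasure c) :
    (c - a) * μ.real {ω | x < X ω + Y ω} = c * exp (-(a * x)) - a * exp (-(c * x)) := by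
  have h_law : μ.map (fun ω ↦ (X ω, Y ω)) = (expMeasure a).prod (expMeasure c) := by
    rw [(indepFun_iff_map_prod_eq_prod_map_map hX.aemeasurable hY.aemeasurable).1 hXY, hX_law,
      hY_law]
  rw [← sub_mul_expMeasure_prod_real_lt_add ha hc hx, ← h_law,
    map_measureReal_apply (hX.prodMk hY) (measurableSet_lt (by fun_prop) (by fun_prop))]
  rfl

lemma measureReal_lt_add_mul_ite [IsFiniteMeasure μ] {X Y V : Ω → ℝ} (hX : Measurable X)
    (hY : Measurable Y) (hV : Measurable V) (hXY_V : IndepFun (fun ω ↦ (X ω, Y ω)) V μ) (x u : ℝ) :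
    μ.real {ω | x < X ω + Y ω * (if u < V ω then 1 else 0)} =
      μ.real {ω | x < X ω} * μ.real (V ⁻¹' Iic u) +
        μ.real {ω | x < X ω + Y ω} * μ.real (V ⁻¹' Ioi u) := by
  set P : Ω → ℝ × ℝ := fun ω ↦ (X ω, Y ω)
  have h_mul {s t} (hs : MeasurableSet s) (ht : MeasurableSet t) :
      μ.real (P ⁻¹' s ∩ V ⁻¹' t) = μ.real (P ⁻¹' s) * μ.real (V ⁻¹' t) := by
    simp only [measureReal_def, hXY_V.measure_inter_preimage_eq_mul _ _ hs ht, ENNReal.toReal_mul]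
  have h_split : {ω | x < X ω + Y ω * (if u < V ω then 1 else 0)} =
      (P ⁻¹' {p | x < p.1} ∩ V ⁻¹' Iic u) ∪ (P ⁻¹' {p | x < p.1 + p.2} ∩ V ⁻¹' Ioi u) := by
    ext ω
    by_cases h : u < V ω
    · simp [P, h, not_le.2 h]
    · simp [P, h, not_lt.1 h]
  have h_disj : Disjoint (P ⁻¹' {p | x < p.1} ∩ V ⁻¹' Iic u)
      (P ⁻¹' {p | x < p.1 + p.2} ∩ V ⁻¹' Ioi u) :=
    ((Iic_disjoint_Ioi le_rfl).preimage V).mono inter_subset_right inter_subset_right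
  have hS : MeasurableSet {p : ℝ × ℝ | x < p.1 + p.2} :=
    measurableSet_lt (by fun_prop) (by fun_prop)
  rw [h_split, measureReal_union h_disj ((hX.prodMk hY hS).inter (hV measurableSet_Ioi)),
    h_mul (measurableSet_lt measurable_const measurable_fst) measurableSet_Iic,
    h_mul hS measurableSet_Ioi]
  rfl

end RandomVariables

end ProbabilityTheory

/-- Lemma 5 of the paper: for `u₁, u₂ ∈ (0,1]`, if `E₁, E₂` are i.i.d. standard exponential
and `V` is uniform on `[0,1]`, jointly independent, then
`E₁/u₁ + (E₂/(u₁u₂))·1_{V > u₂}` is exponential with rate `u₁u₂`. -/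
theorem stmt3 {Ω : Type*} [MeasureSpace Ω] [IsProbabilityMeasure (ℙ : Measure Ω)]
    (u₁ u₂ : ℝ) (hu₁ : u₁ ∈ Set.Ioc (0:ℝ) 1) (hu₂ : u₂ ∈ Set.Ioc (0:ℝ) 1)
    (E₁ E₂ V : Ω → ℝ)
    (hmE₁ : Measurable E₁) (hmE₂ : Measurable E₂) (hmV : Measurable V)
    (hindep : iIndepFun ![E₁, E₂, V] ℙ)
    (hE₁ : ∀ x : ℝ, 0 ≤ x → ℙ {ω | x < E₁ ω} = ENNReal.ofReal (Real.exp (-x)))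
    (hE₂ : ∀ x : ℝ, 0 ≤ x → ℙ {ω | x < E₂ ω} = ENNReal.ofReal (Real.exp (-x)))
    (hV : ∀ a b : ℝ, 0 ≤ a → a ≤ b → b ≤ 1 →
      ℙ {ω | V ω ∈ Set.Icc a b} = ENNReal.ofReal (b - a)) :
    ∀ x : ℝ, 0 ≤ x →
      ℙ {ω | x < E₁ ω / u₁ + (E₂ ω / (u₁ * u₂)) * (if u₂ < V ω then 1 else 0)} =
        ENNReal.ofReal (Real.exp (-(u₁ * u₂ * x))) := by
  intro x hx
  obtain ⟨hu₁₀, -⟩ := hu₁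
  obtain ⟨hu₂₀, hu₂₁⟩ := hu₂
  have hc : 0 < u₁ * u₂ := mul_pos hu₁₀ hu₂₀
  have hmeas : ∀ i, Measurable (![E₁, E₂, V] i) := fun i ↦ by fin_cases i <;> assumption
  have hX_law := map_div_eq_expMeasure_of_tail hu₁₀ hmE₁ hE₁
  have hsum := sub_mul_measureReal_lt_add_of_indepFun hu₁₀ hc hx (hmE₁.div_const _)
    (hmE₂.div_const _) ((hindep.indepFun (i := 0) (j := 1) (by decide)).comp
      (measurable_id.div_const u₁) (measurable_id.div_const (u₁ * u₂)))
    hX_law (map_div_eq_expMeasure_of_tail hc hmE₂ hE₂)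
  have hV_le := measureReal_preimage_Iic_of_uniform hmV hV hu₂₀.le hu₂₁
  have hV_gt : (ℙ : Measure Ω).real (V ⁻¹' Ioi u₂) = 1 - u₂ := by
    rw [← compl_Iic, preimage_compl, probReal_compl_eq_one_sub (hmV measurableSet_Iic), hV_le]
  have hE₁_gt : (ℙ : Measure Ω).real {ω | x < E₁ ω / u₁} = exp (-(u₁ * x)) := by
    have h := map_measureReal_apply (μ := ℙ) (hmE₁.div_const u₁) (measurableSet_Ioi (a := x))
    rwa [hX_law, expMeasure_real_Ioi hu₁₀, max_eq_left hx, eq_comm] at h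
  rw [← ofReal_measureReal, measureReal_lt_add_mul_ite (hmE₁.div_const _) (hmE₂.div_const _) hmV
    ((hindep.indepFun_prodMk hmeas 0 1 2 (by decide) (by decide)).comp
      ((measurable_fst.div_const u₁).prodMk (measurable_snd.div_const (u₁ * u₂))) measurable_id)
    x u₂, hE₁_gt, hV_le, hV_gt]
  congr 1
  refine mul_left_cancel₀ hu₁₀.ne' ?_
  linear_combination -hsum
end

section
/- The equation q_0(t) = q_1(t), where q_0(t) = (1 − e^{−t})/t and q_1(t) = (−J(−t) − e^{−t}·J(t))/t, has a unique positive root t_P (numerically t_P = 2.11982…); equivalently, t_P is the unique positive root of −J(−t) − e^{−t}·J(t) = 1 − e^{−t}. Moreover, for every t > 0, q_0(t) > q_1(t) if and only if t < t_P. -/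
open MeasureTheory ProbabilityTheory Real

open MeasureTheory ProbabilityTheory Real

/-!
Write `E = dslope exp 0` for the entire function `(e^ξ - 1)/ξ`. Then `J' = E` and
`E(-t) = e^{-t} E(t)`, so `qGap t = t (q₁(t) - q₀(t)) = -J(-t) - e^{-t} J(t) - (1 - e^{-t})` has
`qGap 0 = 0` and `qGap' t = e^{-t} (J(t) - 1)`. As `J` is increasing with `J(0) = 0 < 1 ≤ J(1)`,
`qGap` decreases up to the point `s ∈ [0, 1]` where `J(s) = 1` and increases after it. Hence it has
exactly one positive zero and is negative exactly before it. The zero is located by evaluating the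
Taylor series `J(x) = ∑ x^{k+1} / ((k+1) (k+1)!)` and that of `exp` at `±2.11982` and `±2.11983`,
with geometric bounds on the tails.
-/

open Set Finset
open scoped Nat

lemma hasSum_pow_div_factorial_succ (x : ℝ) :
    HasSum (fun k : ℕ => x ^ k / (k + 1)!) (dslope exp 0 x) := by
  rcases eq_or_ne x 0 with rfl | hx
  · rw [dslope_same, Real.deriv_exp, Real.exp_zero]
    convert hasSum_ite_eq 0 (1 : ℝ) using 2 with k
    rcases k with _ | k <;> simp
  · have hexp : HasSum (fun k : ℕ => x ^ (k + 1) / (k + 1)!) (exp x - 1) := by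
      have := (hasSum_nat_add_iff' 1).2 (NormedSpace.expSeries_div_hasSum_exp x)
      simpa [← Real.exp_eq_exp_ℝ] using this
    rw [dslope_of_ne _ hx, slope_def_field, Real.exp_zero, sub_zero]
    have hterm : (fun k : ℕ => x ^ k / (k + 1)!) = fun k => x ^ (k + 1) / (k + 1)! / x := by
      ext k
      rw [pow_succ]
      field_simp
    rw [hterm]
    exact hexp.div_const x

lemma continuous_dslope_exp : Continuous (dslope exp 0) := by
  refine continuous_iff_continuousAt.2 fun x => ?_
  rcases eq_or_ne x 0 with rfl | hx
  · exact continuousAt_dslope_same.2 Real.differentiableAt_exp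
  · exact (continuousAt_dslope_of_ne hx).2 Real.continuous_exp.continuousAt

lemma dslope_exp_pos (x : ℝ) : 0 < dslope exp 0 x := by
  rcases lt_trichotomy x 0 with hx | rfl | hx
  · rw [dslope_of_ne _ hx.ne, slope_def_field, Real.exp_zero, sub_zero]
    exact div_pos_of_neg_of_neg (by simpa using hx) hx
  · simp
  · rw [dslope_of_ne _ hx.ne', slope_def_field, Real.exp_zero, sub_zero]
    exact div_pos (by simpa using hx) hx

lemma dslope_exp_neg (x : ℝ) : dslope exp 0 (-x) = exp (-x) * dslope exp 0 x := by
  rcases eq_or_ne x 0 with rfl | hx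
  · simp
  · rw [dslope_of_ne _ hx, dslope_of_ne _ (neg_ne_zero.2 hx), slope_def_field, slope_def_field,
      Real.exp_neg, Real.exp_zero, sub_zero, sub_zero]
    field_simp
    ring

noncomputable def jTerm (x : ℝ) (k : ℕ) : ℝ := x ^ (k + 1) / ((k + 1) * (k + 1)!)

lemma hasDerivAt_jTerm (k : ℕ) (x : ℝ) :
    HasDerivAt (fun y => jTerm y k) (x ^ k / (k + 1)!) x := by
  refine ((hasDerivAt_pow (k + 1) x).div_const ((k + 1) * (k + 1)! : ℝ)).congr_deriv ?_
  rw [Nat.add_sub_cancel]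
  push_cast
  field_simp

lemma summable_jTerm (x : ℝ) : Summable (jTerm x) := by
  refine .of_norm_bounded ((summable_nat_add_iff 1).2 (Real.summable_pow_div_factorial |x|))
    fun k => ?_
  rw [jTerm, Real.norm_eq_abs, abs_div, abs_pow,
    abs_of_pos (by positivity : (0 : ℝ) < (k + 1) * (k + 1)!)]
  gcongr
  exact le_mul_of_one_le_left (Nat.cast_nonneg _) (by simp)

lemma hasDerivAt_tsum_jTerm (x : ℝ) :
    HasDerivAt (fun y => ∑' k, jTerm y k) (dslope exp 0 x) x := by
  set R := |x| + 1
  rw [← (hasSum_pow_div_factorial_succ x).tsum_eq]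
  refine hasDerivAt_tsum_of_isPreconnected (hasSum_pow_div_factorial_succ R).summable
    Metric.isOpen_ball (convex_ball (0 : ℝ) R).isPreconnected (fun k y _ => hasDerivAt_jTerm k y)
    (fun k y hy => ?_) (Metric.mem_ball_self (by positivity : (0:ℝ) < R)) (summable_jTerm 0)
    (by simp [R])
  rw [Real.norm_eq_abs, abs_div, abs_pow, Nat.abs_cast]
  gcongr
  simpa using (Metric.mem_ball.1 hy).le

lemma Jfun_eq_tsum_jTerm (x : ℝ) : Jfun x = ∑' k, jTerm x k := by
  have hae : ∀ᵐ ξ : ℝ, ξ ≠ 0 := measure_eq_zero_iff_ae_notMem.1 (measure_singleton 0)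
  have hJ : Jfun x = ∫ ξ in (0 : ℝ)..x, dslope exp 0 ξ := by
    refine intervalIntegral.integral_congr_ae (hae.mono fun ξ hξ _ => ?_)
    rw [dslope_of_ne _ hξ, slope_def_field, Real.exp_zero, sub_zero]
  rw [hJ, intervalIntegral.integral_eq_sub_of_hasDerivAt (fun y _ => hasDerivAt_tsum_jTerm y)
    (continuous_dslope_exp.intervalIntegrable 0 x)]
  simp [jTerm]

lemma hasSum_jTerm (x : ℝ) : HasSum (jTerm x) (Jfun x) :=
  Jfun_eq_tsum_jTerm x ▸ (summable_jTerm x).hasSum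

lemma hasDerivAt_Jfun (x : ℝ) : HasDerivAt Jfun (dslope exp 0 x) x := by
  simpa only [← Jfun_eq_tsum_jTerm] using hasDerivAt_tsum_jTerm x

lemma strictMono_Jfun : StrictMono Jfun :=
  strictMono_of_deriv_pos fun x => (hasDerivAt_Jfun x).deriv ▸ dslope_exp_pos x

lemma exists_Jfun_eq_one : ∃ s ∈ Icc (0 : ℝ) 1, Jfun s = 1 := by
  have hJ0 : Jfun 0 = 0 := intervalIntegral.integral_same
  have hJ1 : 1 ≤ Jfun 1 := by
    simpa [jTerm] using
      sum_le_hasSum {0} (fun k _ => by unfold jTerm; positivity) (hasSum_jTerm 1)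
  exact intermediate_value_Icc zero_le_one
    (fun x _ => (hasDerivAt_Jfun x).continuousAt.continuousWithinAt) ⟨hJ0.symm ▸ zero_le_one, hJ1⟩

noncomputable def qGap (t : ℝ) : ℝ := -Jfun (-t) - exp (-t) * Jfun t - (1 - exp (-t))

lemma hasDerivAt_qGap (t : ℝ) : HasDerivAt qGap (exp (-t) * (Jfun t - 1)) t := by
  have hexp : HasDerivAt (fun t => exp (-t)) (-exp (-t)) t :=
    (hasDerivAt_neg t).exp.congr_deriv (mul_neg_one _)
  have hJneg : HasDerivAt (fun t => Jfun (-t)) (-dslope exp 0 (-t)) t :=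
    ((hasDerivAt_Jfun (-t)).comp t (hasDerivAt_neg t)).congr_deriv (mul_neg_one _)
  refine ((hJneg.neg.sub (hexp.mul (hasDerivAt_Jfun t))).sub
    ((hasDerivAt_const t 1).sub hexp)).congr_deriv ?_
  rw [dslope_exp_neg]
  ring

lemma continuous_qGap : Continuous qGap :=
  continuous_iff_continuousAt.2 fun t => (hasDerivAt_qGap t).continuousAt

lemma qGap_zero : qGap 0 = 0 := by
  simp [qGap, Jfun]

lemma strictAntiOn_qGap {s : ℝ} (hs : Jfun s = 1) : StrictAntiOn qGap (Iic s) := by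
  refine strictAntiOn_of_deriv_neg (convex_Iic s) continuous_qGap.continuousOn fun t ht => ?_
  rw [interior_Iic] at ht
  rw [(hasDerivAt_qGap t).deriv]
  exact mul_neg_of_pos_of_neg (exp_pos _) (by linarith [strictMono_Jfun ht])

lemma strictMonoOn_qGap {s : ℝ} (hs : Jfun s = 1) : StrictMonoOn qGap (Ici s) := by
  refine strictMonoOn_of_deriv_pos (convex_Ici s) continuous_qGap.continuousOn fun t ht => ?_
  rw [interior_Ici] at ht
  rw [(hasDerivAt_qGap t).deriv]
  exact mul_pos (exp_pos _) (by linarith [strictMono_Jfun ht])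

section Valley

variable {α β : Type*} [LinearOrder α] [Preorder β] {f : α → β} {a s c t : α}

lemma apply_lt_iff_of_strictAntiOn_of_strictMonoOn (hanti : StrictAntiOn f (Iic s))
    (hmono : StrictMonoOn f (Ici s)) (has : a ≤ s) (hsc : s < c) (hac : f a = f c) (hat : a < t) :
    f t < f c ↔ t < c := by
  rcases le_total t s with hts | hst
  · exact iff_of_true (hac ▸ hanti has hts hat) (hts.trans_lt hsc)
  · exact hmono.lt_iff_lt hst hsc.le

lemma apply_eq_iff_of_strictAntiOn_of_strictMonoOn (hanti : StrictAntiOn f (Iic s))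
    (hmono : StrictMonoOn f (Ici s)) (has : a ≤ s) (hsc : s < c) (hac : f a = f c) (hat : a < t) :
    f t = f c ↔ t = c := by
  rcases le_total t s with hts | hst
  · exact iff_of_false (hac ▸ (hanti has hts hat).ne) (hts.trans_lt hsc).ne
  · exact hmono.eq_iff_eq hst hsc.le

end Valley

lemma HasSum.abs_sub_sum_range_le_of_ratio {f : ℕ → ℝ} {a r : ℝ} {n : ℕ} (hf : HasSum f a)
    (hr0 : 0 ≤ r) (hr1 : r < 1) (hratio : ∀ k, n ≤ k → |f (k + 1)| ≤ r * |f k|) :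
    |a - ∑ k ∈ range n, f k| ≤ |f n| / (1 - r) := by
  have hgeom : ∀ k, |f (k + n)| ≤ |f n| * r ^ k := by
    intro k
    induction k with
    | zero => simp
    | succ k ih =>
      calc |f (k + 1 + n)| = |f (k + n + 1)| := by rw [Nat.add_right_comm]
        _ ≤ r * |f (k + n)| := hratio _ (Nat.le_add_left n k)
        _ ≤ r * (|f n| * r ^ k) := by gcongr
        _ = |f n| * r ^ (k + 1) := by ring
  rw [div_eq_mul_inv, ← Real.norm_eq_abs]
  exact ((hasSum_nat_add_iff' n).2 hf).norm_le_of_bounded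
    ((hasSum_geometric_of_lt_one hr0 hr1).mul_left _) hgeom

lemma jTerm_succ (x : ℝ) (k : ℕ) :
    jTerm x (k + 1) = x * (k + 1) / (k + 2) ^ 2 * jTerm x k := by
  simp only [jTerm, Nat.factorial_succ (k + 1)]
  push_cast
  field_simp
  ring

lemma abs_Jfun_sub_sum_le {x : ℝ} {n : ℕ} (hx : |x| < n + 1) :
    |Jfun x - ∑ k ∈ range n, jTerm x k| ≤ |jTerm x n| / (1 - |x| / (n + 1)) := by
  refine (hasSum_jTerm x).abs_sub_sum_range_le_of_ratio (by positivity)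
    ((div_lt_one (by positivity)).2 hx) fun k hk => ?_
  rw [jTerm_succ, abs_mul]
  gcongr
  have hnk : ((k : ℝ) + 1) * (n + 1) ≤ ((k : ℝ) + 2) ^ 2 := by
    have : (n : ℝ) ≤ k := by exact_mod_cast hk
    nlinarith
  rw [abs_div, abs_mul, abs_of_pos (by positivity : (0 : ℝ) < k + 1),
    abs_of_pos (by positivity : (0 : ℝ) < (k + 2) ^ 2),
    div_le_div_iff₀ (by positivity) (by positivity), mul_assoc]
  exact mul_le_mul_of_nonneg_left hnk (abs_nonneg x)

lemma abs_exp_sub_sum_le {x : ℝ} {n : ℕ} (hx : |x| / (n + 1) ≤ 1 / 2) :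
    |exp x - ∑ k ∈ range n, x ^ k / k !| ≤ |x| ^ n / n ! * 2 := by
  have := Complex.exp_bound' (x := x) (n := n) (by simpa using hx)
  exact_mod_cast this

lemma qGap_2_11982_neg : qGap 2.11982 < 0 := by
  have hJ := abs_le.1 (abs_Jfun_sub_sum_le (x := 2.11982) (n := 13) (by norm_num [abs_of_pos]))
  have hJ' := abs_le.1 (abs_Jfun_sub_sum_le (x := -2.11982) (n := 13) (by norm_num [abs_of_pos]))
  have he := abs_le.1 (abs_exp_sub_sum_le (x := -2.11982) (n := 16) (by norm_num [abs_of_pos]))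
  norm_num [jTerm, Finset.sum_range_succ, Nat.factorial, abs_of_pos] at hJ hJ' he
  rw [qGap]
  linarith [mul_le_mul_of_nonneg_left hJ.1 (exp_pos (-2.11982)).le]

lemma qGap_2_11983_pos : 0 < qGap 2.11983 := by
  have hJ := abs_le.1 (abs_Jfun_sub_sum_le (x := 2.11983) (n := 13) (by norm_num [abs_of_pos]))
  have hJ' := abs_le.1 (abs_Jfun_sub_sum_le (x := -2.11983) (n := 13) (by norm_num [abs_of_pos]))
  have he := abs_le.1 (abs_exp_sub_sum_le (x := -2.11983) (n := 16) (by norm_num [abs_of_pos]))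
  norm_num [jTerm, Finset.sum_range_succ, Nat.factorial, abs_of_pos] at hJ hJ' he
  rw [qGap]
  linarith [mul_le_mul_of_nonneg_left hJ.2 (exp_pos (-2.11983)).le]

/-- The equation `q_0(t) = q_1(t)`, with `q_0(t) = (1 - e^{-t})/t` and
`q_1(t) = (-J(-t) - e^{-t}J(t))/t`, has a unique positive root `t_P = 2.11982…`;
equivalently `t_P` is the unique positive root of `-J(-t) - e^{-t}J(t) = 1 - e^{-t}`.
Moreover, for `t > 0`, `q_0(t) > q_1(t)` iff `t < t_P`. -/
theorem stmt16 :
    ∃ tP : ℝ, 0 < tP ∧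
      (1 - Real.exp (-tP)) / tP = (-Jfun (-tP) - Real.exp (-tP) * Jfun tP) / tP ∧
      (∀ t : ℝ, 0 < t →
        ((1 - Real.exp (-t)) / t = (-Jfun (-t) - Real.exp (-t) * Jfun t) / t → t = tP)) ∧
      (∀ t : ℝ, 0 < t →
        ((1 - Real.exp (-t)) / t = (-Jfun (-t) - Real.exp (-t) * Jfun t) / t ↔
          -Jfun (-t) - Real.exp (-t) * Jfun t = 1 - Real.exp (-t))) ∧
      tP ∈ Set.Ico (2.11982 : ℝ) 2.11983 ∧
      (∀ t : ℝ, 0 < t →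
        ((1 - Real.exp (-t)) / t > (-Jfun (-t) - Real.exp (-t) * Jfun t) / t ↔ t < tP)) := by
  obtain ⟨s, ⟨hs0, hs1⟩, hJs⟩ := exists_Jfun_eq_one
  obtain ⟨tP, ⟨hlo, hhi⟩, hroot⟩ : ∃ tP ∈ Ioo (2.11982 : ℝ) 2.11983, qGap tP = 0 :=
    intermediate_value_Ioo (by norm_num) continuous_qGap.continuousOn
      ⟨qGap_2_11982_neg, qGap_2_11983_pos⟩
  have hsP : s < tP := by linarith
  have hval : qGap 0 = qGap tP := qGap_zero.trans hroot.symm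
  have hneg : ∀ t, 0 < t → (qGap t < 0 ↔ t < tP) := fun t ht => hroot ▸
    apply_lt_iff_of_strictAntiOn_of_strictMonoOn (strictAntiOn_qGap hJs) (strictMonoOn_qGap hJs)
      hs0 hsP hval ht
  have hzero : ∀ t, 0 < t → (qGap t = 0 ↔ t = tP) := fun t ht => hroot ▸
    apply_eq_iff_of_strictAntiOn_of_strictMonoOn (strictAntiOn_qGap hJs) (strictMonoOn_qGap hJs)
      hs0 hsP hval ht
  have hdiv : ∀ t : ℝ, 0 < t → ((1 - exp (-t)) / t = (-Jfun (-t) - exp (-t) * Jfun t) / t ↔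
      -Jfun (-t) - exp (-t) * Jfun t = 1 - exp (-t)) := fun t ht =>
    (div_left_inj' ht.ne').trans eq_comm
  refine ⟨tP, by linarith, (hdiv tP (by linarith)).2 (sub_eq_zero.1 hroot),
    fun t ht h => (hzero t ht).1 (sub_eq_zero.2 ((hdiv t ht).1 h)), hdiv, ⟨hlo.le, hhi⟩,
    fun t ht => ?_⟩
  rw [gt_iff_lt, div_lt_div_iff_of_pos_right ht, ← sub_neg]
  exact hneg t ht
end
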